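/- arXiv:0807.4562 — 3 statements merged into one kernel-verified Lean document; each statement's English description precedes it below -/
import Mathlib

section
/- Let A, A₀, B be commutative rings, f : A → A₀ a surjective ring homomorphism whose kernel is a nilpotent ideal, and g : B → A₀ an arbitrary ring homomorphism. Then the second projection q : A ×_{A₀} B → B is surjective and its kernel is a nilpotent ideal; consequently the induced continuous map on prime spectra Spec B → Spec(A ×_{A₀} B) is a homeomorphism. -/
/-!
Every `b : B` lifts to `(a, b)` with `f a = g b` because `f` is surjective. An element of the
kernel of the second projection has the form `(a, 0)` with `f a = 0`, so the first projection
embeds that kernel into `ker f`, and a power of it vanishes with the corresponding power of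
`ker f`. A surjection whose kernel is nil induces a homeomorphism on prime spectra.
-/

/-- The fiber product ring `A ×_{A₀} B` of `f : A → A₀` and `g : B → A₀`, realized as the
subring of `A × B` of pairs `(a, b)` with `f a = g b`. -/
def ringFiberProduct {A A₀ B : Type*} [CommRing A] [CommRing A₀] [CommRing B]
    (f : A →+* A₀) (g : B →+* A₀) : Subring (A × B) :=
  RingHom.eqLocus (f.comp (RingHom.fst A B)) (g.comp (RingHom.snd A B))

namespace Ideal

variable {R S : Type*} [CommSemiring R] [CommSemiring S]

theorem le_nilradical_of_isNilpotent {I : Ideal R} (hI : IsNilpotent I) : I ≤ nilradical R := by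
  obtain ⟨n, hn⟩ := hI
  intro x hx
  exact ⟨n, by simpa [hn] using pow_mem_pow hx n⟩

theorem isNilpotent_of_map_le {I : Ideal R} {J : Ideal S} (p : R →+* S)
    (hinj : I ⊓ RingHom.ker p = ⊥) (hle : I.map p ≤ J) (hJ : IsNilpotent J) :
    IsNilpotent I := by
  obtain ⟨n, hn⟩ := hJ
  have hker : I ^ (n + 1) ≤ RingHom.ker p := by
    rw [← map_eq_bot_iff_le_ker, Ideal.map_pow, eq_bot_iff]
    calc map p I ^ (n + 1) ≤ J ^ (n + 1) := pow_right_mono hle _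
      _ = ⊥ := by rw [pow_succ, hn, zero_mul]; rfl
  exact ⟨n + 1, eq_bot_iff.mpr <| le_inf (pow_le_self n.succ_ne_zero) hker |>.trans hinj.le⟩

end Ideal

theorem PrimeSpectrum.isHomeomorph_comap_of_surjective_of_isNilpotent_ker {R S : Type*}
    [CommRing R] [CommRing S] {φ : R →+* S} (hφ : Function.Surjective φ)
    (hker : IsNilpotent (RingHom.ker φ)) : IsHomeomorph (PrimeSpectrum.comap φ) :=
  isHomeomorph_comap φ (fun x ↦ ⟨1, one_pos, by simpa using hφ x⟩)
    (Ideal.le_nilradical_of_isNilpotent hker)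

theorem Subring.ker_snd_comp_subtype_inf_ker_fst_comp_subtype {A B : Type*} [Ring A] [Ring B]
    (S : Subring (A × B)) :
    RingHom.ker ((RingHom.snd A B).comp S.subtype) ⊓
      RingHom.ker ((RingHom.fst A B).comp S.subtype) = ⊥ :=
  eq_bot_iff.mpr fun _ ⟨hx₂, hx₁⟩ ↦ Ideal.mem_bot.mpr <| Subtype.ext <| Prod.ext hx₁ hx₂

section ringFiberProduct

variable {A A₀ B : Type*} [CommRing A] [CommRing A₀] [CommRing B] (f : A →+* A₀) (g : B →+* A₀)

theorem ringFiberProduct_snd_surjective (hf : Function.Surjective f) :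
    Function.Surjective ((RingHom.snd A B).comp (ringFiberProduct f g).subtype) := fun b ↦
  let ⟨a, ha⟩ := hf (g b)
  ⟨⟨(a, b), ha⟩, rfl⟩

theorem ringFiberProduct_map_ker_snd_le_ker :
    (RingHom.ker ((RingHom.snd A B).comp (ringFiberProduct f g).subtype)).map
      ((RingHom.fst A B).comp (ringFiberProduct f g).subtype) ≤ RingHom.ker f := by
  refine Ideal.map_le_iff_le_comap.mpr fun x (hx : x.1.2 = 0) ↦ ?_
  have hfx : f x.1.1 = g x.1.2 := x.2
  exact hfx.trans (hx ▸ map_zero g)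

theorem ringFiberProduct_isNilpotent_ker_snd (hker : IsNilpotent (RingHom.ker f)) :
    IsNilpotent (RingHom.ker ((RingHom.snd A B).comp (ringFiberProduct f g).subtype)) :=
  Ideal.isNilpotent_of_map_le _ (Subring.ker_snd_comp_subtype_inf_ker_fst_comp_subtype _)
    (ringFiberProduct_map_ker_snd_le_ker f g) hker

end ringFiberProduct

/-- If `f : A → A₀` is surjective with nilpotent kernel and `g : B → A₀` is
arbitrary, then the second projection `q : A ×_{A₀} B → B` is surjective with nilpotent
kernel, and the induced map `Spec B → Spec (A ×_{A₀} B)` is a homeomorphism. -/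
theorem fiberProduct_snd_surjective_nilpotent_kernel_and_spec_homeomorph
    {A A₀ B : Type*} [CommRing A] [CommRing A₀] [CommRing B]
    (f : A →+* A₀) (g : B →+* A₀)
    (hf : Function.Surjective f) (hker : IsNilpotent (RingHom.ker f)) :
    Function.Surjective ((RingHom.snd A B).comp (ringFiberProduct f g).subtype) ∧
    IsNilpotent (RingHom.ker ((RingHom.snd A B).comp (ringFiberProduct f g).subtype)) ∧
    IsHomeomorph
      (PrimeSpectrum.comap ((RingHom.snd A B).comp (ringFiberProduct f g).subtype)) := by
  have hsurj := ringFiberProduct_snd_surjective f g hf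
  have hnil := ringFiberProduct_isNilpotent_ker_snd f g hker
  exact ⟨hsurj, hnil, PrimeSpectrum.isHomeomorph_comap_of_surjective_of_isNilpotent_ker hsurj hnil⟩
end

section
/- Let A be a nontrivial commutative ring, G a finite group, g ∈ G an element of order ν, and λ ∈ A a scalar with λ^ν = 1. Let A[G] be the monoid algebra of G over A, on which g acts A-linearly by left translation (i.e. x ↦ (single g 1) · x, sending the basis vector e_h to e_{gh}). Then the λ-eigenspace { x ∈ A[G] : g · x = λ • x } is a direct summand of A[G] as an A-module and is a free A-module of rank |G|/ν. -/
/-!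
Since `λ ^ ν = 1`, `λ` is a unit, and there are weights `w : G → Aˣ` with `w (g * h) = λ * w h`:
take `w (g ^ k * r) = λ ^ k` for a fixed representative `r` of each right coset `⟨g⟩ r`; this is
well defined because `λ ^ ν = 1`. Coefficientwise, `g • x = λ • x` says `x h = λ * x (g * h)`, so
`x` is a `λ`-eigenvector iff `h ↦ w h * x h` is constant on right cosets of `⟨g⟩`. Hence
`f ↦ ∑ h, (w h)⁻¹ * f ⟦h⟧ • e_h` identifies functions on `⟨g⟩ \ G` with the eigenspace. Reading
off the (weighted) coefficients at the coset representatives is a left inverse of this map, and its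
kernel is a complement of the eigenspace. There are `|G| / ν` cosets.
-/

open QuotientGroup Subgroup

section Cosets

variable {G : Type*} [Group G]

theorem rightRel_zpowers_mk_mul_left (g h : G) :
    (⟦g * h⟧ : Quotient (rightRel (zpowers g))) = ⟦h⟧ :=
  Quotient.sound <| rightRel_apply.mpr <| by simp

theorem exists_zpow_mul_out_rightRel_zpowers (g h : G) :
    ∃ k : ℤ, g ^ k * (⟦h⟧ : Quotient (rightRel (zpowers g))).out = h := by
  obtain ⟨k, hk⟩ :=
    mem_zpowers_iff.mp (rightRel_apply.mp (Quotient.mk_out (s := rightRel (zpowers g)) h))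
  exact ⟨k, by rw [hk, inv_mul_cancel_right]⟩

theorem apply_zpow_mul_of_forall_apply_mul {β : Type*} {g : G} {f : G → β}
    (hf : ∀ h, f (g * h) = f h) (k : ℤ) (x : G) : f (g ^ k * x) = f x :=
  zpow_induction_left (P := fun y => f (y * x) = f x) (by rw [one_mul])
    (fun a ha => by rw [mul_assoc, hf, ha])
    (fun a ha => by rw [← ha, ← hf, mul_assoc, mul_inv_cancel_left]) k

theorem apply_out_rightRel_zpowers_of_forall_apply_mul {β : Type*} {g : G} {f : G → β}
    (hf : ∀ h, f (g * h) = f h) (h : G) :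
    f (⟦h⟧ : Quotient (rightRel (zpowers g))).out = f h := by
  obtain ⟨k, hk⟩ := exists_zpow_mul_out_rightRel_zpowers g h
  rw [← apply_zpow_mul_of_forall_apply_mul hf k, hk]

theorem exists_equivariant_of_pow_orderOf_eq_one {M : Type*} [Group M] (g : G) {u : M}
    (hu : u ^ orderOf g = 1) : ∃ w : G → M, ∀ h, w (g * h) = u * w h := by
  choose k hk using fun h : G => exists_zpow_mul_out_rightRel_zpowers g h
  refine ⟨fun h => u ^ k h, fun h => ?_⟩
  have hpow : g ^ k (g * h) = g ^ (1 + k h) := by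
    have hgh := hk (g * h)
    rw [rightRel_zpowers_mk_mul_left] at hgh
    exact mul_right_cancel (hgh.trans (by rw [zpow_one_add, mul_assoc, hk h]))
  have hmod := (zpow_eq_zpow_iff_modEq.mp hpow).of_dvd
    (Int.natCast_dvd_natCast.mpr (orderOf_dvd_of_pow_eq_one hu))
  simp only [zpow_eq_zpow_iff_modEq.mpr hmod, zpow_one_add]

theorem card_rightRel_zpowers_mul_orderOf (g : G) :
    Nat.card (Quotient (rightRel (zpowers g))) * orderOf g = Nat.card G := by
  rw [Nat.card_congr (quotientRightRelEquivQuotientLeftRel _), ← Nat.card_zpowers,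
    ← card_eq_card_quotient_mul_card_subgroup]

end Cosets

theorem LinearMap.isCompl_range_ker_of_leftInverse {R M F : Type*} [Ring R] [AddCommGroup M]
    [Module R M] [AddCommGroup F] [Module R F] {s : F →ₗ[R] M} {r : M →ₗ[R] F}
    (h : Function.LeftInverse r s) : IsCompl (range s) (ker r) := by
  have hproj := isCompl_of_proj (f := (LinearEquiv.ofLeftInverse h).toLinearMap ∘ₗ r) <| by
    rintro ⟨_, y, rfl⟩
    exact Subtype.ext (by simp [h y])
  rwa [LinearEquiv.ker_comp] at hproj

namespace MonoidAlgebra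

variable {A G : Type*} [CommRing A] [Group G]

theorem mem_eigenspace_mulLeft_single_iff {g : G} {μ : A} {x : MonoidAlgebra A G} :
    x ∈ Module.End.eigenspace (LinearMap.mulLeft A (single g 1)) μ ↔
      ∀ h, x.coeff h = μ * x.coeff (g * h) := by
  simp only [Module.End.mem_eigenspace_iff, LinearMap.mulLeft_apply, ← coeff_inj, Finsupp.ext_iff,
    coeff_single_mul_apply, one_mul, coeff_smul_apply, smul_eq_mul]
  exact ⟨fun hx h => by simpa using hx (g * h), fun hx y => by simpa using hx (g⁻¹ * y)⟩

variable [Finite G] (g : G) (w : G → Aˣ)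

noncomputable def weightedLift : (Quotient (rightRel (zpowers g)) → A) →ₗ[A] MonoidAlgebra A G :=
  ((Finsupp.linearEquivFunOnFinite A A G).symm ≪≫ₗ (coeffLinearEquiv A).symm).toLinearMap ∘ₗ
    LinearMap.mulLeft A (fun h => ((w h)⁻¹ : Aˣ) : G → A) ∘ₗ
    LinearMap.funLeft A A (Quotient.mk (rightRel (zpowers g)))

noncomputable def weightedRestrict :
    MonoidAlgebra A G →ₗ[A] (Quotient (rightRel (zpowers g)) → A) :=
  LinearMap.funLeft A A Quotient.out ∘ₗ LinearMap.mulLeft A (fun h => (w h : A)) ∘ₗ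
    ((coeffLinearEquiv A) ≪≫ₗ Finsupp.linearEquivFunOnFinite A A G).toLinearMap

theorem coeff_weightedLift (f : Quotient (rightRel (zpowers g)) → A) (h : G) :
    (weightedLift g w f).coeff h = ((w h)⁻¹ : Aˣ) * f ⟦h⟧ := rfl

theorem weightedRestrict_apply (x : MonoidAlgebra A G) (q : Quotient (rightRel (zpowers g))) :
    weightedRestrict g w x q = w q.out * x.coeff q.out := rfl

theorem leftInverse_weightedRestrict_weightedLift :
    Function.LeftInverse (weightedRestrict g w) (weightedLift g w) := fun f => by
  ext q
  rw [weightedRestrict_apply, coeff_weightedLift, Quotient.out_eq, Units.mul_inv_cancel_left]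

theorem range_weightedLift {u : Aˣ} (hw : ∀ h, w (g * h) = u * w h) :
    LinearMap.range (weightedLift g w) =
      Module.End.eigenspace (LinearMap.mulLeft A (single g 1)) (u : A) := by
  ext x
  rw [mem_eigenspace_mulLeft_single_iff]
  constructor
  · rintro ⟨f, rfl⟩ h
    rw [coeff_weightedLift, coeff_weightedLift, rightRel_zpowers_mk_mul_left, hw, ← mul_assoc,
      ← Units.val_mul, mul_inv, mul_inv_cancel_left]
  · intro hx
    have hinv : ∀ h, w (g * h) * x.coeff (g * h) = w h * x.coeff h := fun h => by
      rw [hw, hx h, Units.val_mul]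
      ring
    refine ⟨weightedRestrict g w x, ext <| Finsupp.ext fun h => ?_⟩
    rw [coeff_weightedLift, weightedRestrict_apply,
      apply_out_rightRel_zpowers_of_forall_apply_mul (f := fun h => w h * x.coeff h) hinv,
      Units.inv_mul_cancel_left]

end MonoidAlgebra

/-- Let `A` be a nontrivial commutative ring, `G` a finite group, `g ∈ G`
of order `ν`, and `λ ∈ A` with `λ^ν = 1`.  The `λ`-eigenspace of left translation by `g` on
the monoid algebra `A[G]` (i.e. of left multiplication by `single g 1`) is a direct summand
of `A[G]` as an `A`-module and is free of rank `|G|/ν`. -/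
theorem monoidAlgebra_translation_eigenspace_free
    {A : Type*} [CommRing A] [Nontrivial A] {G : Type*} [Group G] [Fintype G]
    (g : G) (ν : ℕ) (hg : orderOf g = ν) (lam : A) (hlam : lam ^ ν = 1) :
    (∃ N' : Submodule A (MonoidAlgebra A G),
        IsCompl
          (Module.End.eigenspace
            (LinearMap.mulLeft A (MonoidAlgebra.single g (1 : A))) lam) N') ∧
    Module.Free A
      (Module.End.eigenspace
        (LinearMap.mulLeft A (MonoidAlgebra.single g (1 : A))) lam) ∧
    Module.finrank A
      (Module.End.eigenspace
        (LinearMap.mulLeft A (MonoidAlgebra.single g (1 : A))) lam)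
      = Fintype.card G / ν := by
  subst hg
  obtain ⟨u, rfl⟩ := IsUnit.of_pow_eq_one hlam (orderOf_pos g).ne'
  obtain ⟨w, hw⟩ :=
    exists_equivariant_of_pow_orderOf_eq_one g (u := u) (Units.ext (by simpa using hlam))
  have hleft := MonoidAlgebra.leftInverse_weightedRestrict_weightedLift g w
  let e := LinearEquiv.ofLeftInverse hleft
  rw [← MonoidAlgebra.range_weightedLift g w hw]
  refine ⟨⟨_, LinearMap.isCompl_range_ker_of_leftInverse hleft⟩, .of_equiv e, ?_⟩
  rw [← e.finrank_eq, Module.finrank_pi, Fintype.card_eq_nat_card, Fintype.card_eq_nat_card,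
    ← card_rightRel_zpowers_mul_orderOf g, Nat.mul_div_cancel _ (orderOf_pos g)]
end

section
/- Call a natural transformation η : F ⟶ G between functors from commutative rings to sets locally of finite presentation if for every filtered category J and every functor R : J ⥤ CommRing, the canonical map colim_j F(R_j) → F(colim_j R_j) ×_{G(colim_j R_j)} colim_j G(R_j), induced by the colimit comparison maps, is a bijection. Let F, G, H : CommRing ⥤ Set be functors and η : F ⟶ G, θ : G ⟶ H natural transformations with θ locally of finite presentation. Then η is locally of finite presentation if and only if the composite θ ∘ η : F ⟶ H is locally of finite presentation. -/
/-!
Bijectivity of the comparison map for `η : F ⟶ G` says exactly that the square of sets with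
top `colim F(R_j) → colim G(R_j)`, bottom `F(colim R) → G(colim R)` and the colimit comparison
maps as sides is a pullback. The squares of `η` and `θ` paste horizontally to the square of
`η ≫ θ`, so the theorem is the pasting lemma for pullbacks.
-/

open CategoryTheory CategoryTheory.Limits

universe u

namespace LFP

/-- The canonical comparison map `colim_j F(R_j) → F(colim_j R_j)`. -/
noncomputable def colimitComparison (F : CommRingCat.{u} ⥤ Type u) {J : Type u}
    [SmallCategory J] [IsFiltered J] (R : J ⥤ CommRingCat.{u}) :
    colimit (R ⋙ F) ⟶ F.obj (colimit R) :=
  colimit.desc (R ⋙ F) (F.mapCocone (colimit.cocone R))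

/-- The canonical map `colim_j F(R_j) → F(colim R) ×_{G(colim R)} colim_j G(R_j)` induced by
the colimit comparison maps and a natural transformation `η : F ⟶ G`. -/
noncomputable def comparisonToFiberProduct {F G : CommRingCat.{u} ⥤ Type u} (η : F ⟶ G)
    {J : Type u} [SmallCategory J] [IsFiltered J] (R : J ⥤ CommRingCat.{u}) :
    colimit (R ⋙ F) →
      { p : F.obj (colimit R) × colimit (R ⋙ G) //
          η.app (colimit R) p.1 = colimitComparison G R p.2 } :=
  fun x =>
    ⟨(colimitComparison F R x, colimMap (Functor.whiskerLeft R η) x), by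
      have h : colimitComparison F R ≫ η.app (colimit R)
          = colimMap (Functor.whiskerLeft R η) ≫ colimitComparison G R := by
        apply colimit.hom_ext
        intro j
        simp only [colimitComparison, colimit.ι_desc_assoc, Functor.mapCocone_ι_app,
          Functor.comp_obj, colimit.cocone_ι, ι_colimMap_assoc, Functor.whiskerLeft_app,
          colimit.ι_desc]
        exact η.naturality (colimit.ι R j)
      first
        | exact congrArg (fun f => f x) h
        | simpa using congrArg (fun f => f x) h⟩

/-- A natural transformation `η : F ⟶ G` of set-valued functors on commutative rings is
*locally of finite presentation* if for every filtered category `J` and every functor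
`R : J ⥤ CommRing`, the canonical map
`colim_j F(R_j) → F(colim R) ×_{G(colim R)} colim_j G(R_j)` is a bijection. -/
def IsLocallyFinitelyPresented {F G : CommRingCat.{u} ⥤ Type u} (η : F ⟶ G) : Prop :=
  ∀ (J : Type u) (_ : SmallCategory J) (_ : IsFiltered J) (R : J ⥤ CommRingCat.{u}),
    Function.Bijective (comparisonToFiberProduct η R)

end LFP

open LFP

namespace CategoryTheory.Limits.Types

theorem bijective_toPullbackObj_iff_isPullback {X₁ X₂ X₃ X₄ : Type u}
    {t : X₁ ⟶ X₂} {l : X₁ ⟶ X₃} {r : X₂ ⟶ X₄} {b : X₃ ⟶ X₄} (w : t ≫ r = l ≫ b) :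
    Function.Bijective
        (fun x ↦ (⟨(l x, t x), (types_congr_hom w x).symm⟩ : PullbackObj b r)) ↔
      IsPullback t l r b := by
  rw [isPullback_iff]
  constructor
  · rintro ⟨inj, surj⟩
    refine ⟨w, fun x y ⟨ht, hl⟩ ↦ inj (Subtype.ext (Prod.ext hl ht)), fun x₂ x₃ h ↦ ?_⟩
    obtain ⟨x, hx⟩ := surj ⟨(x₃, x₂), h.symm⟩
    exact ⟨x, congr_arg (·.1.2) hx, congr_arg (·.1.1) hx⟩
  · rintro ⟨-, inj, surj⟩
    refine ⟨fun x y h ↦ inj x y ⟨congr_arg (·.1.2) h, congr_arg (·.1.1) h⟩, ?_⟩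
    rintro ⟨⟨x₃, x₂⟩, h⟩
    obtain ⟨x, ht, hl⟩ := surj x₂ x₃ h.symm
    exact ⟨x, Subtype.ext (Prod.ext hl ht)⟩

end CategoryTheory.Limits.Types

namespace LFP

variable {F G : CommRingCat.{u} ⥤ Type u}

lemma colimMap_comp_colimitComparison (η : F ⟶ G) {J : Type u} [SmallCategory J] [IsFiltered J]
    (R : J ⥤ CommRingCat.{u}) :
    colimMap (R.whiskerLeft η) ≫ colimitComparison G R =
      colimitComparison F R ≫ η.app (colimit R) := by
  ext j : 1
  simp only [colimitComparison, ι_colimMap_assoc, colimit.ι_desc, colimit.ι_desc_assoc]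
  exact (η.naturality (colimit.ι R j)).symm

lemma isLocallyFinitelyPresented_iff_isPullback (η : F ⟶ G) :
    IsLocallyFinitelyPresented η ↔
      ∀ (J : Type u) [SmallCategory J] [IsFiltered J] (R : J ⥤ CommRingCat.{u}),
        IsPullback (colimMap (R.whiskerLeft η)) (colimitComparison F R)
          (colimitComparison G R) (η.app (colimit R)) :=
  forall₄_congr fun _ _ _ R ↦
    Types.bijective_toPullbackObj_iff_isPullback (colimMap_comp_colimitComparison η R)

end LFP

open LFP

/-- Let `η : F ⟶ G` and `θ : G ⟶ H` be natural transformations of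
set-valued functors on commutative rings, with `θ` locally of finite presentation.  Then
`η` is locally of finite presentation if and only if the composite `θ ∘ η` is. -/
theorem isLocallyFinitelyPresented_comp_iff
    {F G H : CommRingCat.{u} ⥤ Type u} (η : F ⟶ G) (θ : G ⟶ H)
    (hθ : IsLocallyFinitelyPresented θ) :
    IsLocallyFinitelyPresented η ↔ IsLocallyFinitelyPresented (η ≫ θ) := by
  rw [isLocallyFinitelyPresented_iff_isPullback] at hθ
  rw [isLocallyFinitelyPresented_iff_isPullback, isLocallyFinitelyPresented_iff_isPullback]
  refine forall₄_congr fun J _ _ R ↦ ?_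
  have hcomp : colimMap (R.whiskerLeft (η ≫ θ)) =
      colimMap (R.whiskerLeft η) ≫ colimMap (R.whiskerLeft θ) :=
    colim.map_comp (R.whiskerLeft η) (R.whiskerLeft θ)
  rw [hcomp, NatTrans.comp_app]
  exact ((hθ J R).paste_horiz_iff (colimMap_comp_colimitComparison η R)).symm
end
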